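/- Define the binary relative entropy d(x,y) = x·log(x/y) + (1−x)·log((1−x)/(1−y)). For all x ∈ [1/2, 1] and y ∈ (0,1), it holds that d(x,y) ≥ (1/2)·log(1/(4y)). -/
import Mathlib

/-- Lower bound on the binary relative entropy:
`d(x,y) = x log(x/y) + (1−x) log((1−x)/(1−y)) ≥ (1/2) log(1/(4y))`
for `x ∈ [1/2, 1]` and `y ∈ (0,1)`. -/
theorem binary_relative_entropy_lower_bound (x y : ℝ)
    (hx : x ∈ Set.Icc (1 / 2 : ℝ) 1) (hy : y ∈ Set.Ioo (0 : ℝ) 1) :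
    x * Real.log (x / y) + (1 - x) * Real.log ((1 - x) / (1 - y)) ≥
      (1 / 2) * Real.log (1 / (4 * y)) := by
  obtain ⟨hx1, hx2⟩ := hx
  obtain ⟨hy1, hy2⟩ := hy
  have hx0 : 0 < x := by linarith
  -- split logs
  have h1 : x * Real.log (x / y) = x * Real.log x - x * Real.log y := by
    rw [Real.log_div hx0.ne' hy1.ne']; ring
  have h2 : (1 - x) * Real.log ((1 - x) / (1 - y))
      = (1 - x) * Real.log (1 - x) - (1 - x) * Real.log (1 - y) := by
    rcases eq_or_lt_of_le hx2 with h | h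
    · simp [← h]
    · rw [Real.log_div (by linarith) (by linarith)]; ring
  rw [h1, h2]
  -- RHS
  have hrhs : (1 / 2 : ℝ) * Real.log (1 / (4 * y)) = -Real.log 2 - (1 / 2) * Real.log y := by
    rw [Real.log_div one_ne_zero (by positivity), Real.log_one,
      Real.log_mul (by norm_num) hy1.ne',
      show (4 : ℝ) = 2 ^ 2 by norm_num, Real.log_pow]
    push_cast; ring
  rw [hrhs]
  -- entropy bound
  have hent : x * Real.log x + (1 - x) * Real.log (1 - x) ≥ -Real.log 2 := by
    have := Real.binEntropy_le_log_two (p := x)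
    rw [Real.binEntropy, Real.log_inv, Real.log_inv] at this
    nlinarith [this]
  have hly : Real.log y < 0 := Real.log_neg hy1 hy2
  have hl1y : Real.log (1 - y) < 0 := Real.log_neg (by linarith) (by linarith)
  nlinarith [mul_nonneg (by linarith : (0:ℝ) ≤ 1 - x) (by linarith : (0:ℝ) ≤ -Real.log (1 - y)),
    mul_nonneg (by linarith : (0:ℝ) ≤ x - 1/2) (by linarith : (0:ℝ) ≤ -Real.log y)]
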